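/- Let (X,d) be a metric space containing at least two points that is uniformly perfect with constant C ≥ 1, and let μ be a doubling measure on X with constant D ≥ 1. Then μ has no atoms: μ({x}) = 0 for every x ∈ X. -/

import Mathlib

open MeasureTheory Metric

/-- `(X,d)` is uniformly perfect with constant `C`. -/
def UniformlyPerfect (X : Type*) [MetricSpace X] (C : ℝ) : Prop :=
  ∀ (x : X) (r : ℝ), 0 < r → ENNReal.ofReal r ≤ EMetric.diam (Set.univ : Set X) →
    ∃ y : X, r / C ≤ dist x y ∧ dist x y ≤ r

/-- `μ` is a doubling measure with constant `D` on the metric space `X`. -/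
def IsDoublingMeasure {X : Type*} [MetricSpace X] [MeasurableSpace X]
    (μ : Measure X) (D : ℝ) : Prop :=
  (∀ (x : X) (r : ℝ), 0 < r → 0 < μ (closedBall x r) ∧ μ (closedBall x r) < ⊤) ∧
    ∀ (x : X) (r : ℝ), 0 < r →
      μ (closedBall x (2 * r)) ≤ ENNReal.ofReal D * μ (closedBall x r)

/-!
Fix `x` and `r > 0` below the diameter. Uniform perfectness gives a point `y` with
`r / C ≤ d(x, y) ≤ r`; the balls of radius `s = r / (4C)` around `x` and `y` are disjoint and lie
in `B[x, 2r]`, while `B[x, 2r] ⊆ B[y, 2^k s]` once `2^k ≥ 12C`. By doubling, `B[y, s]` carries at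
least the fraction `D^{-k}` of `μ B[x, 2r]`, so
`μ {x} + μ {x} / D^k ≤ μ B[x, s] + μ B[y, s] ≤ μ B[x, 2r]`.
Letting `r → 0`, continuity from above gives `μ {x} + μ {x} / D^k ≤ μ {x}`, so `μ {x} = 0`.
-/

open Filter Topology

lemma tendsto_measure_closedBall_nhdsGT_zero {X : Type*} [MetricSpace X] [MeasurableSpace X]
    [OpensMeasurableSpace X] {μ : Measure X} (x : X) (h : ∃ r > 0, μ (closedBall x r) ≠ ⊤) :
    Tendsto (fun r ↦ μ (closedBall x r)) (𝓝[>] 0) (𝓝 (μ {x})) := by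
  have := tendsto_measure_biInter_gt (μ := μ) (s := closedBall x)
    (fun _ _ ↦ measurableSet_closedBall.nullMeasurableSet)
    (fun _ _ _ hij ↦ closedBall_subset_closedBall hij) h
  rwa [biInter_gt_closedBall, closedBall_zero] at this

namespace IsDoublingMeasure

variable {X : Type*} [MetricSpace X] [MeasurableSpace X] {μ : Measure X} {D : ℝ}

lemma measure_closedBall_two_pow_mul_le (hμ : IsDoublingMeasure μ D) (z : X) {s : ℝ}
    (hs : 0 < s) (k : ℕ) :
    μ (closedBall z (2 ^ k * s)) ≤ ENNReal.ofReal D ^ k * μ (closedBall z s) := by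
  induction k with
  | zero => simp
  | succ k ih =>
    calc μ (closedBall z (2 ^ (k + 1) * s))
        = μ (closedBall z (2 * (2 ^ k * s))) := by rw [pow_succ', mul_assoc]
      _ ≤ ENNReal.ofReal D * μ (closedBall z (2 ^ k * s)) := hμ.2 z _ (by positivity)
      _ ≤ ENNReal.ofReal D * (ENNReal.ofReal D ^ k * μ (closedBall z s)) := by gcongr
      _ = ENNReal.ofReal D ^ (k + 1) * μ (closedBall z s) := by rw [pow_succ', mul_assoc]

lemma measure_singleton_add_div_le [OpensMeasurableSpace X] (hμ : IsDoublingMeasure μ D)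
    {C r : ℝ} (hC : 1 ≤ C) (hr : 0 < r) {x y : X} (hxy : r / C ≤ dist x y)
    (hyx : dist x y ≤ r) {k : ℕ} (hk : 12 * C ≤ 2 ^ k) :
    μ {x} + μ {x} / ENNReal.ofReal D ^ k ≤ μ (closedBall x (2 * r)) := by
  set s := r / (4 * C) with hs_def
  have hC0 : 0 < C := by linarith
  have hs : 0 < s := by positivity
  have hsr : s ≤ r := div_le_self hr.le (by linarith)
  have hdisj : Disjoint (closedBall x s) (closedBall y s) :=
    closedBall_disjoint_closedBall <| by
      calc s + s = r / C / 2 := by rw [hs_def]; field_simp; ring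
        _ < r / C := half_lt_self (by positivity)
        _ ≤ dist x y := hxy
  have hx_sub : closedBall x s ⊆ closedBall x (2 * r) :=
    closedBall_subset_closedBall (by linarith)
  have hy_sub : closedBall y s ⊆ closedBall x (2 * r) :=
    closedBall_subset_closedBall' (by rw [dist_comm]; linarith)
  have hbig_sub : closedBall x (2 * r) ⊆ closedBall y (2 ^ k * s) :=
    closedBall_subset_closedBall' <| by
      calc 2 * r + dist x y ≤ 12 * C * s := by rw [hs_def]; field_simp; linarith
        _ ≤ 2 ^ k * s := by gcongr
  have hx_le : μ {x} ≤ μ (closedBall x (2 * r)) :=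
    measure_mono (Set.singleton_subset_iff.2 (mem_closedBall_self (by positivity)))
  have hy_ge : μ {x} / ENNReal.ofReal D ^ k ≤ μ (closedBall y s) := by
    refine ENNReal.div_le_of_le_mul' ?_
    calc μ {x} ≤ μ (closedBall x (2 * r)) := hx_le
      _ ≤ μ (closedBall y (2 ^ k * s)) := measure_mono hbig_sub
      _ ≤ ENNReal.ofReal D ^ k * μ (closedBall y s) :=
        hμ.measure_closedBall_two_pow_mul_le y hs k
  calc μ {x} + μ {x} / ENNReal.ofReal D ^ k
      ≤ μ (closedBall x s) + μ (closedBall y s) :=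
        add_le_add (measure_mono (Set.singleton_subset_iff.2 (mem_closedBall_self hs.le))) hy_ge
    _ = μ (closedBall x s ∪ closedBall y s) := (measure_union hdisj measurableSet_closedBall).symm
    _ ≤ μ (closedBall x (2 * r)) := measure_mono (Set.union_subset hx_sub hy_sub)

end IsDoublingMeasure

theorem stmt12_general {X : Type*} [MetricSpace X] [Nontrivial X]
    [MeasurableSpace X] [BorelSpace X]
    (C : ℝ) (hC : 1 ≤ C) (hup : UniformlyPerfect X C)
    (μ : Measure X) (D : ℝ) (hμ : IsDoublingMeasure μ D) :
    ∀ x : X, μ {x} = 0 := by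
  intro x
  obtain ⟨a, b, hab⟩ := exists_pair_ne X
  obtain ⟨k, hk⟩ := pow_unbounded_of_one_lt (12 * C) one_lt_two
  have hball_fin : μ (closedBall x 1) ≠ ⊤ := (hμ.1 x 1 one_pos).2.ne
  have hx_fin : μ {x} ≠ ⊤ := ne_top_of_le_ne_top hball_fin
    (measure_mono (Set.singleton_subset_iff.2 (mem_closedBall_self zero_le_one)))
  have hsmall : ∀ᶠ r in 𝓝[>] (0 : ℝ),
      μ {x} + μ {x} / ENNReal.ofReal D ^ k ≤ μ (closedBall x (2 * r)) := by
    filter_upwards [Ioc_mem_nhdsGT (dist_pos.2 hab)] with r ⟨hr, hr_ab⟩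
    have hr_diam : ENNReal.ofReal r ≤ EMetric.diam (Set.univ : Set X) :=
      (ENNReal.ofReal_le_ofReal hr_ab).trans <| by
        rw [← edist_dist]; exact Metric.edist_le_ediam_of_mem trivial trivial
    obtain ⟨y, hxy, hyx⟩ := hup x r hr hr_diam
    exact hμ.measure_singleton_add_div_le hC hr hxy hyx hk.le
  have hlim := (tendsto_measure_closedBall_nhdsGT_zero x ⟨1, one_pos, hball_fin⟩).comp
    (tendsto_iff_comap.2 (comap_mulLeft_nhdsGT_zero two_pos).ge)
  have hdiv : μ {x} / ENNReal.ofReal D ^ k = 0 :=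
    nonpos_iff_eq_zero.1 <| (ENNReal.add_le_add_iff_left hx_fin).1 <| by
      simpa using ge_of_tendsto hlim hsmall
  simpa [ENNReal.div_eq_zero_iff, ENNReal.pow_ne_top] using hdiv

theorem stmt12 {X : Type*} [MetricSpace X] [Nontrivial X]
    [MeasurableSpace X] [BorelSpace X]
    (C : ℝ) (hC : 1 ≤ C) (hup : UniformlyPerfect X C)
    (μ : Measure X) (D : ℝ) (hD : 1 ≤ D) (hμ : IsDoublingMeasure μ D) :
    ∀ x : X, μ {x} = 0 :=
  stmt12_general C hC hup μ D hμ
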